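/- arXiv:0910.4106 — 3 statements merged into one kernel-verified Lean document; each statement's English description precedes it below -/
import Mathlib

section
/- Every metacompact Moore space is monotonically metacompact. -/
open Set TopologicalSpace

def PointFinite {X : Type*} (C : Set (Set X)) : Prop :=
  ∀ x : X, {U ∈ C | x ∈ U}.Finite

def Refines {X : Type*} (A B : Set (Set X)) : Prop :=
  ∀ U ∈ A, ∃ V ∈ B, U ⊆ V

def IsOpenCover' {X : Type*} [TopologicalSpace X] (C : Set (Set X)) : Prop :=
  (∀ U ∈ C, IsOpen U) ∧ ⋃₀ C = Set.univ

def MonotonicallyMetacompact (X : Type*) [TopologicalSpace X] : Prop :=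
  ∃ r : Set (Set X) → Set (Set X),
    (∀ U, IsOpenCover' U →
      IsOpenCover' (r U) ∧ PointFinite (r U) ∧ Refines (r U) U) ∧
    (∀ U V, IsOpenCover' U → IsOpenCover' V → Refines U V → Refines (r U) (r V))

def MonotonicallyCountablyMetacompact (X : Type*) [TopologicalSpace X] : Prop :=
  ∃ r : Set (Set X) → Set (Set X),
    (∀ U, IsOpenCover' U → U.Countable →
      IsOpenCover' (r U) ∧ PointFinite (r U) ∧ Refines (r U) U) ∧
    (∀ U V, IsOpenCover' U → IsOpenCover' V → U.Countable → V.Countable →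
      Refines U V → Refines (r U) (r V))

def IsPerfectSpace (X : Type*) [TopologicalSpace X] : Prop :=
  ∀ C : Set X, IsClosed C → ∃ f : ℕ → Set X, (∀ n, IsOpen (f n)) ∧ C = ⋂ n, f n

def St {X : Type*} (x : X) (C : Set (Set X)) : Set X := ⋃₀ {G ∈ C | x ∈ G}

def IsDevelopment {X : Type*} [TopologicalSpace X] (G : ℕ → Set (Set X)) : Prop :=
  (∀ n, IsOpenCover' (G n)) ∧
  ∀ x : X, ∀ U : Set X, IsOpen U → x ∈ U → ∃ n, St x (G n) ⊆ U

def IsMooreSpace (X : Type*) [TopologicalSpace X] : Prop :=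
  RegularSpace X ∧ T1Space X ∧ ∃ G : ℕ → Set (Set X), IsDevelopment G

def Metacompact (X : Type*) [TopologicalSpace X] : Prop :=
  ∀ U : Set (Set X), IsOpenCover' U →
    ∃ V, IsOpenCover' V ∧ PointFinite V ∧ Refines V U

/-!
Refine each cover of a development by a point-finite open cover and take cumulative meets: this
gives a development `H` by point-finite covers, each refining all earlier ones. For an open cover
`U`, let `r U` consist of the `S ∈ H n` that lie in a member of `U` but in no `U`-small member of an
earlier `H k`. If `U` refines `V`, a `V`-small superset of `S ∈ r U` taken from the earliest
possible level belongs to `r V`, so `r` is monotone. If `St y (H N)` is `U`-small, then every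
member of `H n`, `n > N`, containing `y` lies in a `U`-small member of `H N`, so only the finitely
many members of `H 0, …, H N` containing `y` can be members of `r U` containing `y`.
-/

section Covers

variable {X : Type*}

theorem IsOpenCover'.exists_mem [TopologicalSpace X] {C : Set (Set X)} (hC : IsOpenCover' C)
    (x : X) : ∃ U ∈ C, x ∈ U :=
  mem_sUnion.mp (hC.2.symm ▸ mem_univ x)

theorem Refines.trans {A B C : Set (Set X)} (hAB : Refines A B) (hBC : Refines B C) :
    Refines A C := by
  intro U hU
  obtain ⟨V, hV, hUV⟩ := hAB U hU
  obtain ⟨W, hW, hVW⟩ := hBC V hV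
  exact ⟨W, hW, hUV.trans hVW⟩

theorem subset_St {C : Set (Set X)} {S : Set X} {x : X} (hS : S ∈ C) (hx : x ∈ S) :
    S ⊆ St x C :=
  subset_sUnion_of_mem ⟨hS, hx⟩

theorem St_subset_of_refines {A B : Set (Set X)} (h : Refines A B) (x : X) :
    St x A ⊆ St x B := by
  rintro y ⟨S, ⟨hS, hxS⟩, hyS⟩
  obtain ⟨W, hW, hSW⟩ := h S hS
  exact subset_St hW (hSW hxS) (hSW hyS)

theorem IsOpenCover'.image2_inter [TopologicalSpace X] {A B : Set (Set X)}
    (hA : IsOpenCover' A) (hB : IsOpenCover' B) : IsOpenCover' (image2 (· ∩ ·) A B) := by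
  refine ⟨?_, eq_univ_of_forall fun x => ?_⟩
  · rintro _ ⟨S, hS, T, hT, rfl⟩
    exact (hA.1 S hS).inter (hB.1 T hT)
  · obtain ⟨S, hS, hxS⟩ := hA.exists_mem x
    obtain ⟨T, hT, hxT⟩ := hB.exists_mem x
    exact ⟨S ∩ T, mem_image2_of_mem hS hT, hxS, hxT⟩

theorem PointFinite.image2_inter {A B : Set (Set X)} (hA : PointFinite A) (hB : PointFinite B) :
    PointFinite (image2 (· ∩ ·) A B) := fun x =>
  ((hA x).image2 _ (hB x)).subset <| by
    rintro _ ⟨⟨S, hS, T, hT, rfl⟩, hxS, hxT⟩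
    exact mem_image2_of_mem ⟨hS, hxS⟩ ⟨hT, hxT⟩

theorem refines_image2_inter_left (A B : Set (Set X)) : Refines (image2 (· ∩ ·) A B) A := by
  rintro _ ⟨S, hS, T, -, rfl⟩
  exact ⟨S, hS, inter_subset_left⟩

theorem refines_image2_inter_right (A B : Set (Set X)) : Refines (image2 (· ∩ ·) A B) B := by
  rintro _ ⟨S, -, T, hT, rfl⟩
  exact ⟨T, hT, inter_subset_right⟩

end Covers

section CumulativeMeet

variable {X : Type*} (P : ℕ → Set (Set X))

def cumulativeMeet : ℕ → Set (Set X)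
  | 0 => P 0
  | n + 1 => image2 (· ∩ ·) (P (n + 1)) (cumulativeMeet n)

theorem cumulativeMeet_isOpenCover [TopologicalSpace X] (hP : ∀ n, IsOpenCover' (P n)) (n : ℕ) :
    IsOpenCover' (cumulativeMeet P n) := by
  induction n with
  | zero => exact hP 0
  | succ n ih => exact (hP (n + 1)).image2_inter ih

theorem cumulativeMeet_pointFinite (hP : ∀ n, PointFinite (P n)) (n : ℕ) :
    PointFinite (cumulativeMeet P n) := by
  induction n with
  | zero => exact hP 0
  | succ n ih => exact (hP (n + 1)).image2_inter ih

theorem cumulativeMeet_refines (n : ℕ) : Refines (cumulativeMeet P n) (P n) := by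
  cases n with
  | zero => exact fun U hU => ⟨U, hU, subset_rfl⟩
  | succ n => exact refines_image2_inter_left _ _

theorem cumulativeMeet_refines_of_le {m n : ℕ} (hmn : m ≤ n) :
    Refines (cumulativeMeet P n) (cumulativeMeet P m) := by
  induction n, hmn using Nat.le_induction with
  | base => exact fun U hU => ⟨U, hU, subset_rfl⟩
  | succ n _ ih => exact (refines_image2_inter_right _ _).trans ih

end CumulativeMeet

section Development

variable {X : Type*} [TopologicalSpace X] {G : ℕ → Set (Set X)}

theorem IsDevelopment.of_refines (hG : IsDevelopment G) {H : ℕ → Set (Set X)}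
    (hH : ∀ n, IsOpenCover' (H n)) (hHG : ∀ n, Refines (H n) (G n)) : IsDevelopment H := by
  refine ⟨hH, fun x U hU hxU => ?_⟩
  obtain ⟨n, hn⟩ := hG.2 x U hU hxU
  exact ⟨n, (St_subset_of_refines (hHG n) x).trans hn⟩

theorem IsDevelopment.exists_pointFinite_antitone (hG : IsDevelopment G) (hX : Metacompact X) :
    ∃ H : ℕ → Set (Set X), IsDevelopment H ∧ (∀ n, PointFinite (H n)) ∧
      ∀ m n, m ≤ n → Refines (H n) (H m) := by
  choose P hPcov hPpf hPG using fun n => hX (G n) (hG.1 n)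
  exact ⟨cumulativeMeet P,
    hG.of_refines (cumulativeMeet_isOpenCover P hPcov)
      fun n => (cumulativeMeet_refines P n).trans (hPG n),
    cumulativeMeet_pointFinite P hPpf, fun _ _ => cumulativeMeet_refines_of_le P⟩

end Development

section MinimalRefinement

variable {X : Type*} (H : ℕ → Set (Set X)) {U : Set (Set X)}

def minimalRefinement (U : Set (Set X)) : Set (Set X) :=
  {S | ∃ n, S ∈ H n ∧ (∃ W ∈ U, S ⊆ W) ∧
    ∀ k < n, ∀ T ∈ H k, (∃ W ∈ U, T ⊆ W) → ¬S ⊆ T}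

theorem exists_mem_minimalRefinement_superset {S W : Set X} {n : ℕ} (hS : S ∈ H n) (hW : W ∈ U)
    (hSW : S ⊆ W) : ∃ T ∈ minimalRefinement H U, S ⊆ T := by
  classical
  have hex : ∃ m, ∃ T ∈ H m, (∃ W ∈ U, T ⊆ W) ∧ S ⊆ T :=
    ⟨n, S, hS, ⟨W, hW, hSW⟩, subset_rfl⟩
  obtain ⟨T, hT, hTU, hST⟩ := Nat.find_spec hex
  refine ⟨T, ⟨Nat.find hex, hT, hTU, fun k hk T' hT' hT'U hTT' => ?_⟩, hST⟩
  exact Nat.find_min hex hk ⟨T', hT', hT'U, hST.trans hTT'⟩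

theorem minimalRefinement_refines (U : Set (Set X)) : Refines (minimalRefinement H U) U :=
  fun _ ⟨_, _, hSU, _⟩ => hSU

theorem minimalRefinement_mono {V : Set (Set X)} (hUV : Refines U V) :
    Refines (minimalRefinement H U) (minimalRefinement H V) := by
  rintro S ⟨n, hS, ⟨W, hW, hSW⟩, -⟩
  obtain ⟨W', hW', hWW'⟩ := hUV W hW
  exact exists_mem_minimalRefinement_superset H hS hW' (hSW.trans hWW')

variable [TopologicalSpace X] {H}

theorem IsDevelopment.minimalRefinement_isOpenCover (hH : IsDevelopment H)
    (hU : IsOpenCover' U) : IsOpenCover' (minimalRefinement H U) := by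
  refine ⟨fun S ⟨n, hS, _⟩ => (hH.1 n).1 S hS, eq_univ_of_forall fun x => ?_⟩
  obtain ⟨W, hW, hxW⟩ := hU.exists_mem x
  obtain ⟨n, hn⟩ := hH.2 x W (hU.1 W hW) hxW
  obtain ⟨S, hS, hxS⟩ := (hH.1 n).exists_mem x
  obtain ⟨T, hT, hST⟩ :=
    exists_mem_minimalRefinement_superset H hS hW ((subset_St hS hxS).trans hn)
  exact ⟨T, hT, hST hxS⟩

theorem IsDevelopment.minimalRefinement_pointFinite (hH : IsDevelopment H)
    (hpf : ∀ n, PointFinite (H n)) (hanti : ∀ m n, m ≤ n → Refines (H n) (H m))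
    (hU : IsOpenCover' U) : PointFinite (minimalRefinement H U) := by
  intro y
  obtain ⟨W, hW, hyW⟩ := hU.exists_mem y
  obtain ⟨N, hN⟩ := hH.2 y W (hU.1 W hW) hyW
  refine ((finite_Iic N).biUnion fun n _ => hpf n y).subset ?_
  rintro S ⟨⟨n, hS, -, hmin⟩, hyS⟩
  have hnN : n ≤ N := by
    by_contra! hNn
    obtain ⟨T, hT, hST⟩ := hanti N n hNn.le S hS
    exact hmin N hNn T hT ⟨W, hW, (subset_St hT (hST hyS)).trans hN⟩ hST
  exact mem_biUnion (mem_Iic.mpr hnN) ⟨hS, hyS⟩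

end MinimalRefinement

theorem stmt5 {X : Type*} [TopologicalSpace X] (h1 : IsMooreSpace X) (h2 : Metacompact X) :
    MonotonicallyMetacompact X := by
  obtain ⟨-, -, G, hG⟩ := h1
  obtain ⟨H, hH, hpf, hanti⟩ := hG.exists_pointFinite_antitone h2
  exact ⟨minimalRefinement H,
    fun U hU => ⟨hH.minimalRefinement_isOpenCover hU,
      hH.minimalRefinement_pointFinite hpf hanti hU, minimalRefinement_refines H U⟩,
    fun _ _ _ _ => minimalRefinement_mono H⟩
end

section
/- Let κ be a regular uncountable cardinal and consider the ordinal space X = [0, κ) with the order topology. Then X is not monotonically countably metacompact. -/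
open Set TopologicalSpace

/-!
Apply the operator `r` to the two-set covers `{(←, b], (b, →)}`: the member of `r` of this cover
containing `b` contains an interval `(a b, b]` with `a b < b`. As countable sets are bounded, a
closing-off argument gives a `γ` with `a b ≤ γ` for unboundedly many `b`; choose such
`b 0 < b 1 < ⋯` above `γ` and let `U` be the countable union of their covers. By monotonicity each
`(γ, b n]` lies in a member of `r U`, which then contains `b 0`. Point-finiteness at `b 0` leaves
finitely many such members, each inside some `(←, b k]` (it meets `b 0`, so it is not inside
`(b k, →)`), and their union cannot contain every `b n`.
-/

section Covers

variable {X : Type*}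

theorem refines_of_subset {A B : Set (Set X)} (h : A ⊆ B) : Refines A B :=
  fun U hU => ⟨U, h hU, subset_rfl⟩

theorem IsOpenCover'.iUnion [TopologicalSpace X] {ι : Type*} [Nonempty ι] {C : ι → Set (Set X)}
    (hC : ∀ i, IsOpenCover' (C i)) : IsOpenCover' (⋃ i, C i) := by
  refine ⟨fun U hU => ?_, ?_⟩
  · obtain ⟨i, hi⟩ := mem_iUnion.1 hU
    exact (hC i).1 U hi
  · obtain ⟨i⟩ := ‹Nonempty ι›
    exact eq_univ_of_univ_subset ((hC i).2 ▸ sUnion_subset_sUnion (subset_iUnion C i))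

end Covers

section WellOrder

variable {Y : Type*} [LinearOrder Y] [WellFoundedLT Y]

theorem BddAbove.exists_isLUB_of_wellFoundedLT {s : Set Y} (hs : BddAbove s) : ∃ β, IsLUB s β :=
  ⟨wellFounded_lt.min (upperBounds s) hs, wellFounded_lt.min_mem _ hs,
    fun _ hc => not_lt.1 (wellFounded_lt.not_lt_min (upperBounds s) hc)⟩

/-- A weak form of Fodor's pressing-down lemma. -/
theorem exists_not_bddAbove_preimage_Iic_of_regressive [NoMaxOrder Y] [Nonempty Y]
    (hbdd : ∀ s : Set Y, s.Countable → BddAbove s) (f : Y → Y) (hf : ∀ y, ¬IsMin y → f y < y) :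
    ∃ γ, ¬BddAbove (f ⁻¹' Iic γ) := by
  by_contra! h
  choose z hz using h
  choose g hg using fun y : Y => exists_gt y
  -- `s (n + 1)` lies beyond `z (s n)`, so their supremum `β` exceeds every `z (s n)`,
  -- while `f β < β` forces `f β < s n` for some `n`
  obtain ⟨y₀⟩ := ‹Nonempty Y›
  set s : ℕ → Y := fun n => (g ∘ z)^[n] y₀
  have hs_succ (n : ℕ) : s (n + 1) = g (z (s n)) := Function.iterate_succ_apply' _ n y₀
  obtain ⟨β, hβ⟩ := (hbdd _ (countable_range s)).exists_isLUB_of_wellFoundedLT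
  have hzβ (n : ℕ) : z (s n) < β :=
    (hs_succ n ▸ hg (z (s n))).trans_le (hβ.1 (mem_range_self (n + 1)))
  obtain ⟨_, ⟨n, rfl⟩, hn⟩ := (lt_isLUB_iff hβ).1 (hf β (not_isMin_of_lt (hzβ 0)))
  exact (hzβ n).not_ge (hz (s n) (show f β ≤ s n from hn.le))

end WellOrder

section SplitCover

variable {Y : Type*} [LinearOrder Y]

def splitCover (b : Y) : Set (Set Y) := {Iic b, Ioi b}

theorem splitCover_countable (b : Y) : (splitCover b).Countable :=
  (countable_singleton _).insert _

theorem exists_strictMono_nat_of_not_bddAbove {S : Set Y} (hS : ¬BddAbove S) (x : Y) :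
    ∃ b : ℕ → Y, StrictMono b ∧ x < b 0 ∧ ∀ n, b n ∈ S := by
  choose g hgS hg using not_bddAbove_iff.1 hS
  refine ⟨fun n => g^[n + 1] x, strictMono_nat_of_lt_succ fun n => ?_, hg x, fun n => ?_⟩
  · show g^[n + 1] x < g^[n + 1 + 1] x
    rw [Function.iterate_succ_apply' g (n + 1)]
    exact hg _
  · show g^[n + 1] x ∈ S
    rw [Function.iterate_succ_apply']
    exact hgS _

theorem not_forall_exists_mem_of_refines_iUnion_splitCover {b : ℕ → Y} (hb : StrictMono b)
    {R : Set (Set Y)} (hR : Refines R (⋃ n, splitCover (b n))) (hfin : {V ∈ R | b 0 ∈ V}.Finite) :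
    ¬∀ n, ∃ V ∈ R, b 0 ∈ V ∧ b n ∈ V := by
  intro hV
  have hbounded : ∀ V ∈ {V ∈ R | b 0 ∈ V}, ∃ k, V ⊆ Iic (b k) := by
    rintro V ⟨hVR, h0⟩
    obtain ⟨U, hU, hVU⟩ := hR V hVR
    obtain ⟨k, rfl | rfl⟩ := mem_iUnion.1 hU
    · exact ⟨k, hVU⟩
    · exact absurd (hVU h0) (not_lt.2 (hb.monotone k.zero_le))
  choose! k hk using hbounded
  obtain ⟨N, hN⟩ := (hfin.image k).bddAbove
  obtain ⟨V, hVR, h0, hNV⟩ := hV (N + 1)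
  have hVN : k V ≤ N := hN ⟨V, ⟨hVR, h0⟩, rfl⟩
  exact (hb N.lt_succ_self).not_ge ((hk V ⟨hVR, h0⟩ hNV).trans (hb.monotone hVN))

end SplitCover

section OrderTopology

variable {Y : Type*} [LinearOrder Y] [TopologicalSpace Y] [OrderTopology Y]

theorem exists_Ioc_subset_of_isOpenCover' {C : Set (Set Y)} (hC : IsOpenCover' C) {b : Y}
    (hb : ¬IsMin b) : ∃ a < b, ∃ W ∈ C, Ioc a b ⊆ W := by
  obtain ⟨W, hWC, hbW⟩ : b ∈ ⋃₀ C := hC.2 ▸ mem_univ b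
  obtain ⟨a, hab, haW⟩ :=
    exists_Ioc_subset_of_mem_nhds ((hC.1 W hWC).mem_nhds hbW) (not_isMin_iff.1 hb)
  exact ⟨a, hab, W, hWC, haW⟩

variable [WellFoundedLT Y] [NoMaxOrder Y]

theorem isOpen_Iic_of_wellFoundedLT (b : Y) : IsOpen (Iic b) := by
  obtain ⟨c, hbc⟩ := exists_covBy_of_wellFoundedLT (not_isMax b)
  rw [← hbc.Iio_eq]
  exact isOpen_Iio

theorem isOpenCover'_splitCover (b : Y) : IsOpenCover' (splitCover b) := by
  refine ⟨?_, by simp [splitCover, Iic_union_Ioi]⟩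
  rintro U (rfl | rfl)
  exacts [isOpen_Iic_of_wellFoundedLT b, isOpen_Ioi]

theorem not_monotonicallyCountablyMetacompact_of_countable_bddAbove [Nonempty Y]
    (hbdd : ∀ s : Set Y, s.Countable → BddAbove s) : ¬MonotonicallyCountablyMetacompact Y := by
  rintro ⟨r, hr, hmono⟩
  have hr_split (b : Y) := hr _ (isOpenCover'_splitCover b) (splitCover_countable b)
  choose! a ha W hW hIoc using fun b (hb : ¬IsMin b) =>
    exists_Ioc_subset_of_isOpenCover' (hr_split b).1 hb
  obtain ⟨γ, hγ⟩ := exists_not_bddAbove_preimage_Iic_of_regressive hbdd a ha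
  obtain ⟨b, hb, hγb₀, hab⟩ := exists_strictMono_nat_of_not_bddAbove hγ γ
  have hγb (n : ℕ) : γ < b n := hγb₀.trans_le (hb.monotone n.zero_le)
  set U := ⋃ n, splitCover (b n)
  have hU : IsOpenCover' U := IsOpenCover'.iUnion fun n => isOpenCover'_splitCover (b n)
  have hUc : U.Countable := countable_iUnion fun n => splitCover_countable (b n)
  obtain ⟨-, hpf, hrU⟩ := hr U hU hUc
  refine not_forall_exists_mem_of_refines_iUnion_splitCover hb hrU (hpf (b 0)) fun n => ?_
  have hbn : ¬IsMin (b n) := not_isMin_of_lt (hγb n)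
  obtain ⟨V, hV, hWV⟩ := hmono _ _ (isOpenCover'_splitCover (b n)) hU (splitCover_countable _) hUc
    (refines_of_subset (subset_iUnion (fun n => splitCover (b n)) n)) _ (hW _ hbn)
  have hIoc_sub : Ioc γ (b n) ⊆ V := (Ioc_subset_Ioc_left (hab n)).trans ((hIoc _ hbn).trans hWV)
  exact ⟨V, hV, hIoc_sub ⟨hγb 0, hb.monotone n.zero_le⟩, hIoc_sub ⟨hγb n, le_rfl⟩⟩

end OrderTopology

universe u

theorem Cardinal.IsRegular.bddAbove_of_countable {κ : Cardinal.{u}} (hreg : κ.IsRegular)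
    (hunc : Cardinal.aleph0 < κ) {s : Set (Iio κ.ord)} (hs : s.Countable) : BddAbove s := by
  have hcard : Cardinal.mk (Subtype.val '' s) < (Ordinal.lift.{u + 1} κ.ord).cof := by
    rw [← Ordinal.lift_cof, hreg.cof_ord]
    exact (Cardinal.le_aleph0_iff_set_countable.2 (hs.image _)).trans_lt
      (Cardinal.aleph0_lt_lift.2 hunc)
  have hsup := Ordinal.sSup_lt_of_lt_cof hcard (by rintro _ ⟨x, -, rfl⟩; exact x.2)
  exact ⟨⟨_, hsup⟩, fun x hx => Subtype.mk_le_mk.2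
    (le_csSup ⟨κ.ord, by rintro _ ⟨y, -, rfl⟩; exact y.2.le⟩ (mem_image_of_mem _ hx))⟩

theorem OrderIso.noMaxOrder {α β : Type*} [Preorder α] [Preorder β] [NoMaxOrder β]
    (e : α ≃o β) : NoMaxOrder α :=
  ⟨fun x => let ⟨y, hy⟩ := exists_gt (e x); ⟨e.symm y, e.lt_symm_apply.2 hy⟩⟩

theorem stmt8 {X : Type*} [LinearOrder X] [TopologicalSpace X] [OrderTopology X]
    (κ : Cardinal) (hreg : κ.IsRegular) (hunc : Cardinal.aleph0 < κ)
    (e : X ≃o Set.Iio κ.ord) :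
    ¬ MonotonicallyCountablyMetacompact X := by
  have hlim : Order.IsSuccLimit κ.ord := Cardinal.isSuccLimit_ord hunc.le
  have : WellFoundedLT X := e.toOrderEmbedding.wellFoundedLT
  have : NoMaxOrder (Iio κ.ord) := hlim.isSuccPrelimit.noMaxOrder_Iio
  have : NoMaxOrder X := e.noMaxOrder
  have : Nonempty X := ⟨e.symm ⟨0, hlim.bot_lt⟩⟩
  exact not_monotonicallyCountablyMetacompact_of_countable_bddAbove fun s hs =>
    e.bddAbove_image.1 (hreg.bddAbove_of_countable hunc (hs.image e))
end

section
/- Let X be the subspace of the ordinal space [0, ω₁] consisting of ω₁ together with all non-limit ordinals below ω₁. Then X is monotonically metacompact but not metrizable. -/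
/-! The point `ω₁` is the only non-isolated point of `X`, and its neighbourhoods are generated by
the tails `(γ, ω₁]`, `γ < ω₁`, which shrink as `γ` grows. Sending an open cover `U` to the
singletons of the isolated points together with the largest tail lying inside a member of `U` is
therefore a monotone point-finite refinement operator.

Since `ω₁` has uncountable cofinality, a countable intersection of neighbourhoods of `ω₁` is again
a neighbourhood. In a first countable `T₁` space such a point is isolated, so `X` is not even
first countable. -/

open Set TopologicalSpace

open Filter Topology Cardinal Ordinal

section OneNonIsolatedPoint

variable {X ι : Type*} {p : X} {q : ι → Prop} {N : ι → Set X}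

def fittingIndices (q : ι → Prop) (N : ι → Set X) (U : Set (Set X)) : Set ι :=
  {i | q i ∧ ∃ W ∈ U, N i ⊆ W}

lemma fittingIndices_mono {U V : Set (Set X)} (h : Refines U V) :
    fittingIndices q N U ⊆ fittingIndices q N V := by
  rintro i ⟨hi, W, hWU, hiW⟩
  obtain ⟨W', hW'V, hWW'⟩ := h W hWU
  exact ⟨hi, W', hW'V, hiW.trans hWW'⟩

variable [TopologicalSpace X]

lemma fittingIndices_nonempty (hN : (𝓝 p).HasBasis q N) {U : Set (Set X)}
    (hU : IsOpenCover' U) : (fittingIndices q N U).Nonempty := by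
  obtain ⟨W, hWU, hpW⟩ := hU.2.symm ▸ mem_univ p
  obtain ⟨i, hi, hiW⟩ := hN.mem_iff.mp ((hU.1 W hWU).mem_nhds hpW)
  exact ⟨i, hi, W, hWU, hiW⟩

variable [ConditionallyCompleteLinearOrderBot ι] [WellFoundedLT ι]

/-- For antitone `N`, `N (sInf (fittingIndices q N U))` is the largest basic neighbourhood of `p`
inside a member of `U`. -/
def isolatingRefinement (p : X) (q : ι → Prop) (N : ι → Set X) (U : Set (Set X)) :
    Set (Set X) :=
  insert (N (sInf (fittingIndices q N U))) ((fun x => {x}) '' {p}ᶜ)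

lemma isolatingRefinement_spec (hiso : ∀ x ≠ p, IsOpen ({x} : Set X))
    (hN : (𝓝 p).HasBasis q N) (hopen : ∀ i, IsOpen (N i)) {U : Set (Set X)}
    (hU : IsOpenCover' U) :
    IsOpenCover' (isolatingRefinement p q N U) ∧ PointFinite (isolatingRefinement p q N U) ∧
      Refines (isolatingRefinement p q N U) U := by
  obtain ⟨hq, W, hWU, hNW⟩ := csInf_mem (fittingIndices_nonempty hN hU)
  refine ⟨⟨?_, ?_⟩, ?_, ?_⟩
  · rintro s (rfl | ⟨x, hx, rfl⟩)
    exacts [hopen _, hiso x hx]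
  · refine eq_univ_of_forall fun x => ?_
    by_cases hx : x = p
    · exact ⟨_, mem_insert _ _, hx ▸ mem_of_mem_nhds (hN.mem_of_mem hq)⟩
    · exact ⟨{x}, mem_insert_of_mem _ ⟨x, hx, rfl⟩, rfl⟩
  · refine fun x => ((finite_singleton {x}).insert (N (sInf (fittingIndices q N U)))).subset ?_
    rintro s ⟨rfl | ⟨y, -, rfl⟩, hxs⟩
    exacts [mem_insert _ _, mem_insert_of_mem _ (hxs ▸ rfl)]
  · rintro s (rfl | ⟨x, -, rfl⟩)
    · exact ⟨W, hWU, hNW⟩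
    · obtain ⟨W', hW'U, hxW'⟩ := hU.2.symm ▸ mem_univ x
      exact ⟨W', hW'U, singleton_subset_iff.mpr hxW'⟩

lemma isolatingRefinement_mono (hN : (𝓝 p).HasBasis q N) (hanti : Antitone N)
    {U V : Set (Set X)} (hU : IsOpenCover' U) (h : Refines U V) :
    Refines (isolatingRefinement p q N U) (isolatingRefinement p q N V) := by
  rintro s (rfl | hs)
  · refine ⟨_, mem_insert _ _, hanti (csInf_le (OrderBot.bddBelow _) ?_)⟩
    exact fittingIndices_mono h (csInf_mem (fittingIndices_nonempty hN hU))
  · exact ⟨s, mem_insert_of_mem _ hs, subset_rfl⟩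

theorem monotonicallyMetacompact_of_hasBasis (hiso : ∀ x ≠ p, IsOpen ({x} : Set X))
    (hN : (𝓝 p).HasBasis q N) (hopen : ∀ i, IsOpen (N i)) (hanti : Antitone N) :
    MonotonicallyMetacompact X :=
  ⟨isolatingRefinement p q N, fun _ hU => isolatingRefinement_spec hiso hN hopen hU,
    fun _ _ hU _ h => isolatingRefinement_mono hN hanti hU h⟩

end OneNonIsolatedPoint

theorem isOpen_singleton_of_countableInterFilter_nhds {X : Type*} [TopologicalSpace X]
    [T1Space X] {p : X} [(𝓝 p).IsCountablyGenerated] [CountableInterFilter (𝓝 p)] :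
    IsOpen ({p} : Set X) := by
  obtain ⟨B, hB⟩ := (𝓝 p).exists_antitone_basis
  have hBp : ⋂ n, B n ∈ 𝓝 p := countable_iInter_mem.mpr hB.mem
  refine isOpen_singleton_iff_nhds_eq_pure p |>.mpr (le_antisymm ?_ (pure_le_nhds p))
  refine le_pure_iff.mpr (mem_of_superset hBp fun x hx => ?_)
  by_contra hxp
  obtain ⟨n, -, hn⟩ := hB.toHasBasis.mem_iff.mp (isOpen_compl_singleton.mem_nhds (Ne.symm hxp))
  exact hn (mem_iInter.mp hx n) rfl

namespace NonLimitOrdinals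

noncomputable section

def X : Set Ordinal :=
  {α | (α < (aleph 1).ord ∧ ¬ Order.IsSuccLimit α) ∨ α = (aleph 1).ord}

def omegaOne : X := ⟨(aleph 1).ord, Or.inr rfl⟩

def tail (γ : Ordinal) : Set X := Subtype.val ⁻¹' Ioi γ

lemma isOpen_tail (γ : Ordinal) : IsOpen (tail γ) :=
  isOpen_Ioi.preimage continuous_subtype_val

lemma tail_antitone : Antitone tail := fun _ _ h _ hx => lt_of_le_of_lt h hx

lemma le_omegaOne (x : X) : x.1 ≤ (aleph 1).ord :=
  x.2.elim (fun h => h.1.le) le_of_eq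

lemma isSuccLimit_omegaOne : Order.IsSuccLimit (aleph 1).ord :=
  isSuccLimit_ord (aleph0_le_aleph 1)

lemma nhds_omegaOne_hasBasis : (𝓝 omegaOne).HasBasis (· < (aleph 1).ord) tail := by
  refine ⟨fun s => ⟨fun hs => ?_, fun ⟨γ, hγ, hγs⟩ =>
    mem_of_superset ((isOpen_tail γ).mem_nhds hγ) hγs⟩⟩
  obtain ⟨t, ht, hts⟩ := (mem_nhds_subtype _ _ _).mp hs
  obtain ⟨γ, hγ, hγt⟩ := exists_Ioc_subset_of_mem_nhds ht ⟨0, isSuccLimit_omegaOne.pos⟩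
  exact ⟨γ, hγ, fun x hx => hts (hγt ⟨hx, le_omegaOne x⟩)⟩

lemma isOpen_singleton_of_ne {x : X} (hx : x ≠ omegaOne) : IsOpen ({x} : Set X) := by
  have hsucc : ¬ Order.IsSuccLimit x.1 :=
    (x.2.resolve_right fun h => hx (Subtype.ext h)).2
  have := (SuccOrder.isOpen_singleton_iff.mpr hsucc).preimage
    (continuous_subtype_val (p := (· ∈ X)))
  rwa [← image_singleton, Subtype.val_injective.preimage_image] at this

theorem monotonicallyMetacompact : MonotonicallyMetacompact X :=
  monotonicallyMetacompact_of_hasBasis (fun _ => isOpen_singleton_of_ne) nhds_omegaOne_hasBasis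
    isOpen_tail tail_antitone

instance countableInterFilter_nhds_omegaOne : CountableInterFilter (𝓝 omegaOne) := by
  refine ⟨fun S hS hSnhds => ?_⟩
  have := hS.to_subtype
  choose γ hγ hγS using fun s : S => nhds_omegaOne_hasBasis.mem_iff.mp (hSnhds s s.2)
  have hsup : ⨆ s, γ s < (aleph 1).ord := by
    rw [ord_aleph]
    exact iSup_lt_omega_one fun s => ord_aleph 1 ▸ hγ s
  have hbdd : BddAbove (range γ) := ⟨_, forall_mem_range.mpr fun s => (hγ s).le⟩
  refine nhds_omegaOne_hasBasis.mem_iff.mpr ⟨_, hsup, subset_sInter fun s hs => ?_⟩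
  exact (tail_antitone (le_ciSup hbdd ⟨s, hs⟩)).trans (hγS ⟨s, hs⟩)

lemma not_isOpen_singleton_omegaOne : ¬ IsOpen ({omegaOne} : Set X) := by
  intro h
  obtain ⟨γ, hγ, hγp⟩ := nhds_omegaOne_hasBasis.mem_iff.mp (h.mem_nhds rfl)
  have hx : Order.succ γ ∈ X :=
    Or.inl ⟨isSuccLimit_omegaOne.succ_lt hγ, Order.not_isSuccLimit_succ γ⟩
  have := congrArg Subtype.val (hγp (show (⟨_, hx⟩ : X) ∈ tail γ from Order.lt_succ γ))
  exact (isSuccLimit_omegaOne.succ_lt hγ).ne this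

theorem not_metrizableSpace : ¬ MetrizableSpace X := fun _ =>
  not_isOpen_singleton_omegaOne isOpen_singleton_of_countableInterFilter_nhds

end

end NonLimitOrdinals

theorem stmt13 :
    MonotonicallyMetacompact
      ↥{α : Ordinal | (α < (Cardinal.aleph 1).ord ∧ ¬ Order.IsSuccLimit α) ∨ α = (Cardinal.aleph 1).ord} ∧
    ¬ MetrizableSpace
      ↥{α : Ordinal | (α < (Cardinal.aleph 1).ord ∧ ¬ Order.IsSuccLimit α) ∨ α = (Cardinal.aleph 1).ord} :=
  ⟨NonLimitOrdinals.monotonicallyMetacompact, NonLimitOrdinals.not_metrizableSpace⟩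
end
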